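/- For r ≥ 3, for every mismatched pair {P, Q} of r-patterns there exists an index j with 1 ≤ j ≤ r such that the pair {P^{−j}, Q^{−j}} of (r−1)-patterns is also mismatched, where P^{−j} denotes the pattern obtained by deleting the j-th vertex of each edge. -/

import Mathlib

/-- An `r`-pattern: a word of length `2r` over `{A,B}` (`false` = `A`, `true` = `B`)
with `r` occurrences of each letter, starting with `A`. -/
def IsPattern (r : ℕ) (P : List Bool) : Prop :=
  P.length = 2 * r ∧ P.count true = r ∧ P.head? = some false

/-- The word obtained by concatenating blocks `A^t B^t` (`false`) or `B^t A^t` (`true`). -/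
def wordOfBlocks (blocks : List (ℕ × Bool)) : List Bool :=
  blocks.flatMap fun b => List.replicate b.1 b.2 ++ List.replicate b.1 (!b.2)

/-- `P` is collectable: it splits into consecutive blocks `A^t B^t` or `B^t A^t`. -/
def HasBlockSplitting (r : ℕ) (P : List Bool) : Prop :=
  ∃ blocks : List (ℕ × Bool), (∀ b ∈ blocks, 0 < b.1) ∧
    (blocks.map Prod.fst).sum = r ∧ P = wordOfBlocks blocks

/-- Two collectable patterns are harmonious when they have the same composition, i.e.,
they admit block splittings with the same sequence of block sizes. -/
def SameComposition (P Q : List Bool) : Prop :=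
  ∃ b₁ b₂ : List (ℕ × Bool), (∀ b ∈ b₁, 0 < b.1) ∧ (∀ b ∈ b₂, 0 < b.1) ∧
    P = wordOfBlocks b₁ ∧ Q = wordOfBlocks b₂ ∧ b₁.map Prod.fst = b₂.map Prod.fst

/-- A mismatched pair of `r`-patterns: exactly one of them is collectable, or both are
collectable but with different compositions. -/
def Mismatch (r : ℕ) (P Q : List Bool) : Prop :=
  P ≠ Q ∧ ((HasBlockSplitting r P ∧ ¬ HasBlockSplitting r Q) ∨
    (¬ HasBlockSplitting r P ∧ HasBlockSplitting r Q) ∨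
    (HasBlockSplitting r P ∧ HasBlockSplitting r Q ∧ ¬ SameComposition P Q))

/-- Remove the occurrence number `j` (counting from `0`) of the letter `b` from a word. -/
def removeOcc (b : Bool) : ℕ → List Bool → List Bool
  | _, [] => []
  | j, a :: l =>
      if a = b then (if j = 0 then l else a :: removeOcc b (j - 1) l)
      else a :: removeOcc b j l

/-- Normalize a word so that it starts with `A`, flipping all letters if needed. -/
def canonize (l : List Bool) : List Bool :=
  if l.head? = some true then l.map (fun b => !b) else l

/-- `P^{−j}`: the `(r−1)`-pattern obtained from `P` by deleting the `j`-th vertex of each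
edge, i.e., the `j`-th occurrence of `A` and of `B`, then normalizing to start with `A`. -/
def deleteLetter (j : ℕ) (P : List Bool) : List Bool :=
  canonize (removeOcc true (j - 1) (removeOcc false (j - 1) P))

/-!
A collectable word is a concatenation of tents `x^t (!x)^t` with `t > 0`, and the word determines
its composition `(t₁, …, tₘ)`. Deleting the `j`-th `A` and the `j`-th `B` of such a word shrinks
the tent containing position `j`, so the result is collectable, with the composition obtained by
decrementing the part containing `j`; two different compositions of `r ≥ 3` are separated
by this operation for some `j`.

A balanced word is collectable unless the walk `#A - #B` has a valley: it moves towards `0` and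
immediately away again while at a nonzero level. For a non-collectable pattern some valley
survives a suitable deletion: that of the first letters if both occur before the valley; otherwise
the pattern is `A^m B A ⋯`, and the second letters (`m ≥ 3`) or the fourth ones (`m = 2`, `r ≥ 4`)
can be deleted. The single exception is `AABABB`, whose deletions `AABB`, `ABAB`, `AABB` are
compared with the compositions of `3` directly.
-/

open List

section RemoveOcc

variable (b : Bool)

theorem removeOcc_cons_self (k : ℕ) (l : List Bool) :
    removeOcc b k (b :: l) = if k = 0 then l else b :: removeOcc b (k - 1) l := by
  simp [removeOcc]

theorem removeOcc_cons_of_ne {a : Bool} (hab : a ≠ b) (k : ℕ) (l : List Bool) :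
    removeOcc b k (a :: l) = a :: removeOcc b k l := by
  simp [removeOcc, hab]

theorem removeOcc_append_of_count_le {k : ℕ} {U : List Bool} (V : List Bool)
    (h : U.count b ≤ k) : removeOcc b k (U ++ V) = U ++ removeOcc b (k - U.count b) V := by
  induction U generalizing k with
  | nil => simp
  | cons a U ih =>
    by_cases hab : a = b
    · subst hab
      rw [count_cons_self] at h
      rw [cons_append, removeOcc_cons_self, if_neg (by omega), ih (by omega), count_cons_self,
        Nat.sub_sub, Nat.add_comm 1, cons_append]
    · rw [count_cons_of_ne hab] at h
      rw [cons_append, removeOcc_cons_of_ne b hab, ih h, count_cons_of_ne hab, cons_append]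

theorem removeOcc_append_of_lt_count {k : ℕ} {U : List Bool} (V : List Bool)
    (h : k < U.count b) : removeOcc b k (U ++ V) = removeOcc b k U ++ V := by
  induction U generalizing k with
  | nil => simp at h
  | cons a U ih =>
    by_cases hab : a = b
    · subst hab
      rw [count_cons_self] at h
      rcases Nat.eq_zero_or_pos k with rfl | hk
      · simp [removeOcc_cons_self]
      · rw [cons_append, removeOcc_cons_self, removeOcc_cons_self, if_neg (by omega),
          if_neg (by omega), ih (by omega), cons_append]
    · rw [count_cons_of_ne hab] at h
      rw [cons_append, removeOcc_cons_of_ne b hab, removeOcc_cons_of_ne b hab, ih h, cons_append]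

theorem removeOcc_replicate_self {k n : ℕ} (h : k < n) :
    removeOcc b k (replicate n b) = replicate (n - 1) b := by
  induction n generalizing k with
  | zero => omega
  | succ n ih =>
    rw [replicate_succ, removeOcc_cons_self]
    rcases Nat.eq_zero_or_pos k with rfl | hk
    · simp
    · rw [if_neg (by omega), ih (by omega), ← replicate_succ]
      congr 1
      omega

theorem count_removeOcc_of_ne {b' : Bool} (hb : b' ≠ b) (k : ℕ) (U : List Bool) :
    (removeOcc b k U).count b' = U.count b' := by
  induction U generalizing k with
  | nil => rfl
  | cons a U ih =>
    by_cases hab : a = b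
    · subst hab
      rw [removeOcc_cons_self]
      split_ifs <;> simp [ih, Ne.symm hb]
    · rw [removeOcc_cons_of_ne b hab]
      simp [count_cons, ih]

theorem count_removeOcc_self {k : ℕ} {U : List Bool} (h : k < U.count b) :
    (removeOcc b k U).count b = U.count b - 1 := by
  induction U generalizing k with
  | nil => simp at h
  | cons a U ih =>
    by_cases hab : a = b
    · subst hab
      rw [count_cons_self] at h
      rw [removeOcc_cons_self]
      split_ifs with hk
      · simp
      · rw [count_cons_self, count_cons_self, ih (by omega)]
        omega
    · rw [count_cons_of_ne hab] at h
      rw [removeOcc_cons_of_ne b hab, count_cons_of_ne hab, count_cons_of_ne hab, ih h]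

end RemoveOcc

section Composition

theorem wordOfBlocks_cons (t : ℕ) (x : Bool) (bs : List (ℕ × Bool)) :
    wordOfBlocks ((t, x) :: bs) = replicate t x ++ replicate t (!x) ++ wordOfBlocks bs := by
  simp [wordOfBlocks]

theorem count_wordOfBlocks (b : Bool) (bs : List (ℕ × Bool)) :
    (wordOfBlocks bs).count b = (bs.map Prod.fst).sum := by
  induction bs with
  | nil => rfl
  | cons p bs ih =>
    obtain ⟨t, x⟩ := p
    rw [wordOfBlocks_cons, count_append, count_append, ih]
    cases b <;> cases x <;> simp [count_replicate]

theorem map_not_wordOfBlocks (bs : List (ℕ × Bool)) :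
    (wordOfBlocks bs).map (!·) = wordOfBlocks (bs.map fun p => (p.1, !p.2)) := by
  simp [wordOfBlocks, map_flatMap, flatMap_map]

theorem replicate_append_cons_not_inj {t s : ℕ} {x : Bool} {L L' : List Bool}
    (h : replicate t x ++ (!x) :: L = replicate s x ++ (!x) :: L') : t = s ∧ L = L' := by
  induction t generalizing s with
  | zero => cases s <;> cases x <;> simp_all [replicate_succ]
  | succ t ih =>
    cases s with
    | zero => cases x <;> simp_all [replicate_succ]
    | succ s => simpa [replicate_succ] using ih (by simpa [replicate_succ] using h)

theorem wordOfBlocks_cons_ne_nil {t : ℕ} (ht : 0 < t) (x : Bool) (bs : List (ℕ × Bool)) :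
    wordOfBlocks ((t, x) :: bs) ≠ [] := by
  obtain ⟨t, rfl⟩ : ∃ t', t = t' + 1 := ⟨t - 1, by omega⟩
  simp [wordOfBlocks_cons, replicate_succ]

theorem wordOfBlocks_cons_inj {t s : ℕ} {x y : Bool} {bs bs' : List (ℕ × Bool)}
    (ht : 0 < t) (hs : 0 < s)
    (h : wordOfBlocks ((t, x) :: bs) = wordOfBlocks ((s, y) :: bs')) :
    (t, x) = (s, y) ∧ wordOfBlocks bs = wordOfBlocks bs' := by
  obtain ⟨t, rfl⟩ : ∃ t', t = t' + 1 := ⟨t - 1, by omega⟩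
  obtain ⟨s, rfl⟩ : ∃ s', s = s' + 1 := ⟨s - 1, by omega⟩
  obtain rfl : x = y := by simpa [wordOfBlocks_cons, replicate_succ] using congrArg head? h
  rw [wordOfBlocks_cons, wordOfBlocks_cons, replicate_succ (a := !x) (n := t),
    replicate_succ (a := !x) (n := s), append_assoc, append_assoc, cons_append, cons_append] at h
  obtain ⟨hts, h⟩ := replicate_append_cons_not_inj h
  obtain rfl : t = s := by omega
  exact ⟨rfl, append_cancel_left h⟩

theorem eq_of_wordOfBlocks_eq {bs₁ bs₂ : List (ℕ × Bool)} (h₁ : ∀ p ∈ bs₁, 0 < p.1)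
    (h₂ : ∀ p ∈ bs₂, 0 < p.1) (h : wordOfBlocks bs₁ = wordOfBlocks bs₂) : bs₁ = bs₂ := by
  induction bs₁ generalizing bs₂ with
  | nil =>
    cases bs₂ with
    | nil => rfl
    | cons p bs₂ => exact absurd h.symm (wordOfBlocks_cons_ne_nil (h₂ p (by simp)) _ _)
  | cons p bs₁ ih =>
    cases bs₂ with
    | nil => exact absurd h (wordOfBlocks_cons_ne_nil (h₁ p (by simp)) _ _)
    | cons q bs₂ =>
      obtain ⟨hpq, h⟩ := wordOfBlocks_cons_inj (h₁ p (by simp)) (h₂ q (by simp)) h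
      rw [show p = q from hpq,
        ih (fun p hp => h₁ p (mem_cons_of_mem _ hp)) (fun p hp => h₂ p (mem_cons_of_mem _ hp)) h]

def HasComposition (c : List ℕ) (W : List Bool) : Prop :=
  ∃ bs : List (ℕ × Bool), (∀ p ∈ bs, 0 < p.1) ∧ W = wordOfBlocks bs ∧ bs.map Prod.fst = c

namespace HasComposition

variable {c c₁ c₂ : List ℕ} {W : List Bool}

theorem pos (h : HasComposition c W) : ∀ t ∈ c, 0 < t := by
  obtain ⟨bs, hpos, -, rfl⟩ := h
  intro t ht
  obtain ⟨p, hp, rfl⟩ := mem_map.1 ht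
  exact hpos p hp

theorem sum_eq_count (h : HasComposition c W) (b : Bool) : c.sum = W.count b := by
  obtain ⟨bs, -, rfl, rfl⟩ := h
  rw [count_wordOfBlocks]

theorem unique (h₁ : HasComposition c₁ W) (h₂ : HasComposition c₂ W) : c₁ = c₂ := by
  obtain ⟨bs₁, hpos₁, rfl, rfl⟩ := h₁
  obtain ⟨bs₂, hpos₂, he, rfl⟩ := h₂
  rw [eq_of_wordOfBlocks_eq hpos₁ hpos₂ he]

theorem map_not (h : HasComposition c W) : HasComposition c (W.map (!·)) := by
  obtain ⟨bs, hpos, rfl, rfl⟩ := h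
  refine ⟨bs.map fun p => (p.1, !p.2), fun q hq => ?_, map_not_wordOfBlocks bs, by simp⟩
  obtain ⟨p, hp, rfl⟩ := mem_map.1 hq
  exact hpos p hp

end HasComposition

theorem hasComposition_canonize_iff {c : List ℕ} {W : List Bool} :
    HasComposition c (canonize W) ↔ HasComposition c W := by
  unfold canonize
  split_ifs
  · exact ⟨fun h => by simpa [Function.comp_def] using h.map_not, HasComposition.map_not⟩
  · rfl

theorem hasBlockSplitting_iff {n : ℕ} {W : List Bool} :
    HasBlockSplitting n W ↔ ∃ c, HasComposition c W ∧ c.sum = n := by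
  constructor
  · rintro ⟨bs, hpos, hsum, he⟩
    exact ⟨_, ⟨bs, hpos, he, rfl⟩, hsum⟩
  · rintro ⟨c, ⟨bs, hpos, he, rfl⟩, hsum⟩
    exact ⟨bs, hpos, hsum, he⟩

theorem sameComposition_iff {W₁ W₂ : List Bool} :
    SameComposition W₁ W₂ ↔ ∃ c, HasComposition c W₁ ∧ HasComposition c W₂ := by
  constructor
  · rintro ⟨bs₁, bs₂, hpos₁, hpos₂, he₁, he₂, hm⟩
    exact ⟨_, ⟨bs₁, hpos₁, he₁, rfl⟩, ⟨bs₂, hpos₂, he₂, hm.symm⟩⟩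
  · rintro ⟨c, ⟨bs₁, hpos₁, he₁, rfl⟩, ⟨bs₂, hpos₂, he₂, hm⟩⟩
    exact ⟨bs₁, bs₂, hpos₁, hpos₂, he₁, he₂, hm.symm⟩

theorem mismatch_comm {n : ℕ} {W₁ W₂ : List Bool} : Mismatch n W₁ W₂ ↔ Mismatch n W₂ W₁ := by
  suffices ∀ {W₁ W₂ : List Bool}, Mismatch n W₁ W₂ → Mismatch n W₂ W₁ from ⟨this, this⟩
  rintro W₁ W₂ ⟨hne, ⟨h₁, h₂⟩ | ⟨h₁, h₂⟩ | ⟨h₁, h₂, h⟩⟩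
  · exact ⟨hne.symm, Or.inr <| Or.inl ⟨h₂, h₁⟩⟩
  · exact ⟨hne.symm, Or.inl ⟨h₂, h₁⟩⟩
  · refine ⟨hne.symm, Or.inr <| Or.inr ⟨h₂, h₁, fun h' => h ?_⟩⟩
    obtain ⟨c, hc₂, hc₁⟩ := sameComposition_iff.1 h'
    exact sameComposition_iff.2 ⟨c, hc₁, hc₂⟩

theorem mismatch_of_hasComposition_ne {n : ℕ} {c₁ c₂ : List ℕ} {W₁ W₂ : List Bool}
    (h₁ : HasComposition c₁ W₁) (h₂ : HasComposition c₂ W₂) (hne : c₁ ≠ c₂)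
    (hs₁ : c₁.sum = n) (hs₂ : c₂.sum = n) : Mismatch n W₁ W₂ := by
  refine ⟨?_, Or.inr <| Or.inr ⟨hasBlockSplitting_iff.2 ⟨c₁, h₁, hs₁⟩,
    hasBlockSplitting_iff.2 ⟨c₂, h₂, hs₂⟩, ?_⟩⟩
  · rintro rfl
    exact hne (h₁.unique h₂)
  · rw [sameComposition_iff]
    rintro ⟨c, hc₁, hc₂⟩
    exact hne ((h₁.unique hc₁).trans (hc₂.unique h₂))

theorem mismatch_of_not_hasComposition {n : ℕ} {c : List ℕ} {W₁ W₂ : List Bool}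
    (h₁ : HasComposition c W₁) (hs : c.sum = n) (h₂ : ∀ c', ¬ HasComposition c' W₂) :
    Mismatch n W₁ W₂ := by
  refine ⟨?_, Or.inl ⟨hasBlockSplitting_iff.2 ⟨c, h₁, hs⟩, ?_⟩⟩
  · rintro rfl
    exact h₂ c h₁
  · rw [hasBlockSplitting_iff]
    rintro ⟨c', hc', -⟩
    exact h₂ c' hc'

end Composition

section Deletion

def removePair (k : ℕ) (W : List Bool) : List Bool :=
  removeOcc true k (removeOcc false k W)

theorem deleteLetter_succ (k : ℕ) (W : List Bool) :
    deleteLetter (k + 1) W = canonize (removePair k W) := rfl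

theorem removeOcc_replicate_self_append (b : Bool) {k t : ℕ} (L : List Bool) (h : k < t) :
    removeOcc b k (replicate t b ++ L) = replicate (t - 1) b ++ L := by
  rw [removeOcc_append_of_lt_count _ _ (by simpa using h), removeOcc_replicate_self _ h]

theorem removeOcc_replicate_append_of_ne {b x : Bool} (hx : x ≠ b) (k t : ℕ) (L : List Bool) :
    removeOcc b k (replicate t x ++ L) = replicate t x ++ removeOcc b k L := by
  rw [removeOcc_append_of_count_le _ _ (by simp [count_replicate, hx]),
    count_replicate, beq_false_of_ne hx]
  rfl

theorem removePair_tent_append_of_lt {k t : ℕ} (x : Bool) (L : List Bool) (h : k < t) :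
    removePair k (replicate t x ++ replicate t (!x) ++ L)
      = replicate (t - 1) x ++ replicate (t - 1) (!x) ++ L := by
  rw [removePair]
  cases x
  · rw [Bool.not_false, append_assoc, removeOcc_replicate_self_append _ _ h,
      removeOcc_replicate_append_of_ne (by decide : false ≠ true),
      removeOcc_replicate_self_append _ _ h, append_assoc]
  · rw [Bool.not_true, append_assoc, removeOcc_replicate_append_of_ne (by decide : true ≠ false),
      removeOcc_replicate_self_append false _ h, removeOcc_replicate_self_append true _ h,
      append_assoc]

theorem removePair_tent_append_of_le {k t : ℕ} (x : Bool) (L : List Bool) (h : t ≤ k) :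
    removePair k (replicate t x ++ replicate t (!x) ++ L)
      = replicate t x ++ replicate t (!x) ++ removePair (k - t) L := by
  have hcount : ∀ b, (replicate t x ++ replicate t (!x)).count b = t := by
    intro b; cases b <;> cases x <;> simp [count_replicate]
  rw [removePair, removeOcc_append_of_count_le _ _ (by rw [hcount]; exact h), hcount,
    removeOcc_append_of_count_le _ _ (by rw [hcount]; exact h), hcount, removePair]

-- Positions `k` are counted from `0`, whereas `deleteLetter j` counts from `1`.
def decAt : List ℕ → ℕ → List ℕ
  | [], _ => []
  | t :: c, k => if k < t then (if t = 1 then c else (t - 1) :: c) else t :: decAt c (k - t)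

def decBlocks : List (ℕ × Bool) → ℕ → List (ℕ × Bool)
  | [], _ => []
  | (t, x) :: bs, k =>
    if k < t then (if t = 1 then bs else (t - 1, x) :: bs) else (t, x) :: decBlocks bs (k - t)

theorem map_fst_decBlocks (bs : List (ℕ × Bool)) (k : ℕ) :
    (decBlocks bs k).map Prod.fst = decAt (bs.map Prod.fst) k := by
  induction bs generalizing k with
  | nil => rfl
  | cons p bs ih =>
    obtain ⟨t, x⟩ := p
    simp only [decBlocks, decAt, map_cons]
    split_ifs <;> simp [ih]

theorem decBlocks_pos {bs : List (ℕ × Bool)} (hpos : ∀ p ∈ bs, 0 < p.1) (k : ℕ) :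
    ∀ p ∈ decBlocks bs k, 0 < p.1 := by
  induction bs generalizing k with
  | nil => simp [decBlocks]
  | cons p bs ih =>
    obtain ⟨t, x⟩ := p
    have htl : ∀ p ∈ bs, 0 < p.1 := fun p hp => hpos p (mem_cons_of_mem _ hp)
    simp only [decBlocks]
    split_ifs with hk ht
    · exact htl
    · exact forall_mem_cons.2 ⟨by dsimp only; omega, htl⟩
    · exact forall_mem_cons.2 ⟨hpos _ mem_cons_self, ih htl _⟩

theorem removePair_wordOfBlocks {bs : List (ℕ × Bool)} (hpos : ∀ p ∈ bs, 0 < p.1) {k : ℕ}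
    (hk : k < (bs.map Prod.fst).sum) :
    removePair k (wordOfBlocks bs) = wordOfBlocks (decBlocks bs k) := by
  induction bs generalizing k with
  | nil => simp at hk
  | cons p bs ih =>
    obtain ⟨t, x⟩ := p
    have htl : ∀ p ∈ bs, 0 < p.1 := fun p hp => hpos p (mem_cons_of_mem _ hp)
    rw [wordOfBlocks_cons, decBlocks]
    by_cases hkt : k < t
    · rw [removePair_tent_append_of_lt x _ hkt, if_pos hkt]
      split_ifs with ht
      · simp [ht]
      · rw [wordOfBlocks_cons]
    · simp only [map_cons, sum_cons] at hk
      rw [removePair_tent_append_of_le x _ (by omega), if_neg hkt, ih htl (by omega),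
        wordOfBlocks_cons]

theorem sum_decAt {c : List ℕ} (hpos : ∀ t ∈ c, 0 < t) {k : ℕ} (hk : k < c.sum) :
    (decAt c k).sum = c.sum - 1 := by
  induction c generalizing k with
  | nil => simp at hk
  | cons t c ih =>
    have ht := hpos t mem_cons_self
    simp only [sum_cons] at hk ⊢
    rw [decAt]
    split_ifs with hkt ht1
    · simp [ht1]
    · rw [sum_cons]
      omega
    · rw [sum_cons, ih (fun t ht => hpos t (mem_cons_of_mem _ ht)) (by omega)]
      omega

theorem HasComposition.sum_decAt {c : List ℕ} {W : List Bool} (h : HasComposition c W) {r : ℕ}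
    (hs : c.sum = r) {k : ℕ} (hk : k < r) : (decAt c k).sum = r - 1 := by
  rw [_root_.sum_decAt h.pos (hs ▸ hk), hs]

theorem HasComposition.deleteLetter {c : List ℕ} {W : List Bool} (h : HasComposition c W)
    {k : ℕ} (hk : k < c.sum) : HasComposition (decAt c k) (deleteLetter (k + 1) W) := by
  obtain ⟨bs, hpos, rfl, rfl⟩ := h
  rw [deleteLetter_succ, hasComposition_canonize_iff, removePair_wordOfBlocks hpos hk]
  exact ⟨decBlocks bs k, decBlocks_pos hpos k, rfl, map_fst_decBlocks bs k⟩

end Deletion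

section CompositionDifference

theorem decAt_cons_zero {t : ℕ} (ht : 0 < t) (c : List ℕ) :
    decAt (t :: c) 0 = if t = 1 then c else (t - 1) :: c := by
  simp [decAt, ht]

theorem decAt_cons_of_le {t k : ℕ} (h : t ≤ k) (c : List ℕ) :
    decAt (t :: c) k = t :: decAt c (k - t) := by
  simp [decAt, not_lt.2 h]

theorem eq_or_of_decAt_zero_eq {s t : ℕ} {σ τ : List ℕ} (hs : 0 < s) (hst : s ≤ t)
    (h : decAt (s :: σ) 0 = decAt (t :: τ) 0) :
    s :: σ = t :: τ ∨ s = 1 ∧ 2 ≤ t ∧ σ = (t - 1) :: τ := by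
  rw [decAt_cons_zero hs, decAt_cons_zero (by omega)] at h
  split_ifs at h with h₁ h₂ h₂
  · exact Or.inl (by rw [h₁, h₂, h])
  · exact Or.inr ⟨h₁, by omega, h⟩
  · omega
  · obtain ⟨h, rfl⟩ := cons_eq_cons.1 h
    exact Or.inl (by rw [show s = t by omega])

theorem exists_decAt_ne_one_cons {t : ℕ} {τ : List ℕ} (ht : 2 ≤ t) (hτ : ∀ u ∈ τ, 0 < u)
    (hr : 3 ≤ (t :: τ).sum) :
    ∃ k < (t :: τ).sum, decAt (1 :: (t - 1) :: τ) k ≠ decAt (t :: τ) k := by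
  cases τ with
  | nil =>
    simp only [sum_cons, sum_nil, add_zero] at hr ⊢
    refine ⟨t - 1, by omega, ?_⟩
    rw [decAt_cons_of_le (by omega)]
    simp only [decAt]
    split_ifs <;> simp <;> omega
  | cons u τ =>
    have hu := hτ u mem_cons_self
    refine ⟨t, by simp only [sum_cons]; omega, ?_⟩
    rw [decAt_cons_of_le (t := 1) (by omega), decAt_cons_of_le (t := t - 1) le_rfl,
      decAt_cons_of_le (t := t) le_rfl]
    simp

theorem exists_decAt_ne {c₁ c₂ : List ℕ} {r : ℕ} (hr : 3 ≤ r) (hpos₁ : ∀ t ∈ c₁, 0 < t)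
    (hpos₂ : ∀ t ∈ c₂, 0 < t) (hs₁ : c₁.sum = r) (hs₂ : c₂.sum = r) (hne : c₁ ≠ c₂) :
    ∃ k < r, decAt c₁ k ≠ decAt c₂ k := by
  obtain ⟨s, σ, rfl⟩ := exists_cons_of_ne_nil (by rintro rfl; simp at hs₁; omega : c₁ ≠ [])
  obtain ⟨t, τ, rfl⟩ := exists_cons_of_ne_nil (by rintro rfl; simp at hs₂; omega : c₂ ≠ [])
  by_cases h₀ : decAt (s :: σ) 0 = decAt (t :: τ) 0
  swap
  · exact ⟨0, by omega, h₀⟩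
  wlog hst : s ≤ t generalizing s σ t τ
  · obtain ⟨k, hk, h⟩ := this t τ hpos₂ hs₂ s σ hpos₁ hs₁ hne.symm h₀.symm (by omega)
    exact ⟨k, hk, Ne.symm h⟩
  rcases eq_or_of_decAt_zero_eq (hpos₁ s mem_cons_self) hst h₀ with heq | ⟨rfl, ht, rfl⟩
  · exact absurd heq hne
  · exact hs₂ ▸
      exists_decAt_ne_one_cons ht (fun u hu => hpos₂ u (mem_cons_of_mem _ hu)) (hs₂ ▸ hr)

end CompositionDifference

section Valley

/-- After `U` the walk `#(!c) - #c` is at level at least `2`, and the letters `c, !c` make it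
step towards `0` and away again. -/
def HasValley (W : List Bool) : Prop :=
  ∃ U V : List Bool, ∃ c : Bool, W = U ++ c :: (!c) :: V ∧ U.count c + 2 ≤ U.count (!c)

theorem hasValley_append_of_count_eq {B W : List Bool} (hB : B.count true = B.count false)
    (h : HasValley W) : HasValley (B ++ W) := by
  obtain ⟨U, V, c, rfl, hU⟩ := h
  refine ⟨B ++ U, V, c, by simp, ?_⟩
  rw [count_append, count_append]
  cases c <;> simp only [Bool.not_false, Bool.not_true] at hU ⊢ <;> omega

theorem append_cons_eq_replicate_append {α : Type*} {U V W : List α} {c a : α} {n : ℕ}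
    (h : U ++ c :: V = replicate n a ++ W) :
    (∃ k < n, U = replicate k a ∧ c = a ∧ V = replicate (n - k - 1) a ++ W) ∨
      ∃ U', U = replicate n a ++ U' ∧ W = U' ++ c :: V := by
  induction n generalizing U with
  | zero => exact Or.inr ⟨U, rfl, h.symm⟩
  | succ n ih =>
    cases U with
    | nil =>
      obtain ⟨rfl, rfl⟩ := cons_eq_cons.1 h
      exact Or.inl ⟨0, n.succ_pos, rfl, rfl, rfl⟩
    | cons u U =>
      obtain ⟨rfl, h⟩ := cons_eq_cons.1 h
      rcases ih h with ⟨k, hk, rfl, rfl, rfl⟩ | ⟨U', rfl, rfl⟩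
      · exact Or.inl ⟨k + 1, by omega, rfl, rfl, by rw [Nat.add_sub_add_right]⟩
      · exact Or.inr ⟨U', rfl, rfl⟩

theorem HasValley.of_tent_append {t : ℕ} {x : Bool} {W : List Bool}
    (h : HasValley (replicate t x ++ replicate t (!x) ++ W)) : HasValley W := by
  obtain ⟨U, V, c, hW, hU⟩ := h
  rw [append_assoc] at hW
  rcases append_cons_eq_replicate_append hW.symm with ⟨k, -, rfl, rfl, -⟩ | ⟨U, rfl, hW'⟩
  · cases c <;> simp [count_replicate] at hU
  rcases append_cons_eq_replicate_append hW'.symm with ⟨k, hk, rfl, rfl, hV⟩ | ⟨U, rfl, rfl⟩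
  · obtain ⟨m, hm⟩ : ∃ m, t - k - 1 = m + 1 := ⟨t - k - 2, by
      cases x <;> simp [count_replicate] at hU <;> omega⟩
    rw [hm, replicate_succ, cons_append] at hV
    cases x <;> simp at hV
  · refine ⟨U, V, c, rfl, ?_⟩
    simp only [count_append] at hU
    cases c <;> cases x <;> simp [count_replicate] at hU ⊢ <;> omega

theorem not_hasValley_wordOfBlocks {bs : List (ℕ × Bool)} (hpos : ∀ p ∈ bs, 0 < p.1) :
    ¬ HasValley (wordOfBlocks bs) := by
  induction bs with
  | nil =>
    rintro ⟨U, V, c, h, -⟩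
    simp [wordOfBlocks] at h
  | cons p bs ih =>
    intro h
    rw [wordOfBlocks_cons] at h
    exact ih (fun p hp => hpos p (mem_cons_of_mem _ hp)) h.of_tent_append

theorem HasValley.not_hasComposition {W : List Bool} (h : HasValley W) (c : List ℕ) :
    ¬ HasComposition c W := by
  rintro ⟨bs, hpos, rfl, -⟩
  exact not_hasValley_wordOfBlocks hpos h

theorem HasComposition.tent_append {c : List ℕ} {W : List Bool} (h : HasComposition c W)
    {t : ℕ} (ht : 0 < t) (x : Bool) :
    HasComposition (t :: c) (replicate t x ++ replicate t (!x) ++ W) := by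
  obtain ⟨bs, hpos, rfl, rfl⟩ := h
  exact ⟨(t, x) :: bs, forall_mem_cons.2 ⟨ht, hpos⟩, (wordOfBlocks_cons t x bs).symm, rfl⟩

theorem exists_replicate_append_of_head? {W : List Bool} {x : Bool} (h : W.head? = some x) :
    ∃ a W', 0 < a ∧ W = replicate a x ++ W' ∧ W'.head? ≠ some x := by
  induction W with
  | nil => simp at h
  | cons y W ih =>
    obtain rfl : y = x := by simpa using h
    by_cases hW : W.head? = some y
    · obtain ⟨a, W', -, rfl, hW'⟩ := ih hW
      exact ⟨a + 1, W', a.succ_pos, rfl, hW'⟩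
    · exact ⟨1, W, one_pos, rfl, hW⟩

theorem hasValley_replicate_append {a b : ℕ} (hba : b < a) (hb : 0 < b) (x : Bool)
    (V : List Bool) : HasValley (replicate a x ++ replicate b (!x) ++ x :: V) := by
  refine ⟨replicate a x ++ replicate (b - 1) (!x), V, !x, ?_, ?_⟩
  · obtain ⟨b, rfl⟩ : ∃ b', b = b' + 1 := ⟨b - 1, by omega⟩
    simp [replicate_succ']
  · cases x <;> simp [count_replicate] <;> omega

theorem hasValley_of_forall_not_hasComposition {W : List Bool}
    (hbal : W.count true = W.count false) (hW : ∀ c, ¬ HasComposition c W) : HasValley W := by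
  induction hn : W.length using Nat.strong_induction_on generalizing W with
  | _ n ih =>
  obtain ⟨x, hx⟩ : ∃ x, W.head? = some x := by
    cases W with
    | nil => exact absurd ⟨[], by simp, rfl, rfl⟩ (hW [])
    | cons x _ => exact ⟨x, rfl⟩
  obtain ⟨a, W₂, ha, rfl, hW₂⟩ := exists_replicate_append_of_head? hx
  obtain ⟨b, W₃, hb, rfl, hW₃⟩ : ∃ b W₃, 0 < b ∧ W₂ = replicate b (!x) ++ W₃ ∧
      W₃.head? ≠ some (!x) := by
    cases W₂ with
    | nil => cases x <;> simp [count_replicate] at hbal <;> omega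
    | cons y W₂ => exact exists_replicate_append_of_head? (by cases x <;> cases y <;> simp_all)
  rcases lt_or_ge b a with hba | hab
  · obtain ⟨V, rfl⟩ : ∃ V, W₃ = x :: V := by
      cases W₃ with
      | nil => cases x <;> simp [count_replicate] at hbal <;> omega
      | cons y V => exact ⟨V, by cases x <;> cases y <;> simp_all⟩
    simpa using hasValley_replicate_append hba hb x V
  · obtain ⟨d, rfl⟩ := Nat.exists_eq_add_of_le hab
    have hsplit : replicate a x ++ (replicate (a + d) (!x) ++ W₃)
        = replicate a x ++ replicate a (!x) ++ (replicate d (!x) ++ W₃) := by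
      rw [replicate_add, append_assoc, append_assoc]
    rw [hsplit] at hbal hW hn ⊢
    refine hasValley_append_of_count_eq (by cases x <;> simp [count_replicate]) (ih _ ?_ ?_
      (fun c hc => hW (a :: c) (hc.tent_append ha x)) rfl)
    · simp only [length_append, length_replicate] at hn ⊢
      omega
    · cases x <;> simp [count_replicate] at hbal ⊢ <;> omega

end Valley

section Survival

theorem IsPattern.count_false {r : ℕ} {P : List Bool} (hP : IsPattern r P) :
    P.count false = r := by
  have := count_true_add_count_false P
  rw [hP.1, hP.2.1] at this
  omega

theorem HasValley.not_hasComposition_deleteLetter {k : ℕ} {W : List Bool}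
    (h : HasValley (removePair k W)) (c : List ℕ) :
    ¬ HasComposition c (deleteLetter (k + 1) W) := by
  rw [deleteLetter_succ, hasComposition_canonize_iff]
  exact h.not_hasComposition c

theorem hasValley_removePair_zero {U V : List Bool} {c : Bool}
    (hU : U.count c + 2 ≤ U.count (!c)) (hf : 0 < U.count false) (ht : 0 < U.count true) :
    HasValley (removePair 0 (U ++ c :: (!c) :: V)) := by
  have ht' : 0 < (removeOcc false 0 U).count true := by
    rwa [count_removeOcc_of_ne _ (by decide)]
  rw [removePair, removeOcc_append_of_lt_count _ _ hf, removeOcc_append_of_lt_count _ _ ht']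
  refine ⟨_, V, c, rfl, ?_⟩
  have h₁ : (removeOcc true 0 (removeOcc false 0 U)).count false = U.count false - 1 := by
    rw [count_removeOcc_of_ne _ (by decide), count_removeOcc_self _ hf]
  have h₂ : (removeOcc true 0 (removeOcc false 0 U)).count true = U.count true - 1 := by
    rw [count_removeOcc_self _ ht', count_removeOcc_of_ne _ (by decide)]
  cases c <;> simp only [Bool.not_false, Bool.not_true, h₁, h₂] at hU ⊢ <;> omega

theorem hasValley_removePair_of_le {U V : List Bool} {c : Bool} {k : ℕ}
    (hU : U.count c + 2 ≤ U.count (!c)) (hf : (U ++ [c, !c]).count false ≤ k)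
    (ht : (U ++ [c, !c]).count true ≤ k) : HasValley (removePair k (U ++ c :: (!c) :: V)) := by
  rw [show U ++ c :: (!c) :: V = U ++ [c, !c] ++ V by simp, removePair,
    removeOcc_append_of_count_le _ _ hf, removeOcc_append_of_count_le _ _ ht]
  exact ⟨U, _, c, append_assoc .., hU⟩

theorem hasValley_removePair_one {m : ℕ} (hm : 3 ≤ m) (V : List Bool) :
    HasValley (removePair 1 (replicate m false ++ true :: false :: V)) := by
  rw [removePair, removeOcc_replicate_self_append _ _ (by omega),
    removeOcc_replicate_append_of_ne (by decide)]
  refine ⟨replicate (m - 1) false, removeOcc true 0 V, true, by simp [removeOcc], ?_⟩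
  simpa [count_replicate] using (by omega : 2 ≤ m - 1)

theorem IsPattern.exists_hasValley_removePair {r : ℕ} {Q : List Bool} (hQ : IsPattern r Q)
    (hr : 3 ≤ r) (hv : HasValley Q) :
    (∃ k < r, HasValley (removePair k Q)) ∨
      r = 3 ∧ Q = [false, false, true, false, true, true] := by
  have hf := hQ.count_false
  obtain ⟨hlen, -, hhead⟩ := hQ
  obtain ⟨U, V, c, rfl, hU⟩ := hv
  by_cases hboth : 0 < U.count false ∧ 0 < U.count true
  · exact Or.inl ⟨0, by omega, hasValley_removePair_zero hU hboth.1 hboth.2⟩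
  obtain rfl : c = true := by
    cases c
    · obtain ⟨u, U, rfl⟩ := exists_cons_of_ne_nil (by rintro rfl; simp at hU : U ≠ [])
      obtain rfl : u = false := by simpa using hhead
      rw [Bool.not_false, count_cons_self, count_cons_of_ne (by decide)] at hU
      exact absurd ⟨by rw [count_cons_self]; omega, by rw [count_cons_of_ne (by decide)]; omega⟩
        hboth
    · rfl
  rw [Bool.not_true] at hU
  obtain ⟨m, rfl⟩ : ∃ m, U = replicate m false := by
    refine ⟨U.length, eq_replicate_iff.2 ⟨rfl, fun b hb => ?_⟩⟩
    cases b
    · rfl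
    · exact absurd ⟨by omega, count_pos_iff.2 hb⟩ hboth
  have hm : 2 ≤ m := by simpa [count_replicate] using hU
  rcases Nat.lt_or_ge 2 m with hm | hm
  · exact Or.inl ⟨1, by omega, hasValley_removePair_one hm V⟩
  obtain rfl : m = 2 := by omega
  by_cases hr4 : 4 ≤ r
  · exact Or.inl ⟨3, by omega, hasValley_removePair_of_le hU (by simp) (by simp)⟩
  obtain rfl : r = 3 := by omega
  refine Or.inr ⟨rfl, ?_⟩
  obtain rfl : V = replicate 2 true := by
    refine eq_replicate_iff.2 ⟨by simp at hlen; omega, fun b hb => ?_⟩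
    cases b
    · rw [count_append, count_replicate_self, count_cons_of_ne (by decide), Bool.not_true,
        count_cons_self] at hf
      have := count_pos_iff.2 hb
      omega
    · rfl
  rfl

end Survival

section Inheritance

theorem eq_of_decAt_zero_eq_two {c : List ℕ} (hpos : ∀ t ∈ c, 0 < t) (h : decAt c 0 = [2]) :
    c = [3] ∨ c = [1, 2] := by
  cases c with
  | nil => simp [decAt] at h
  | cons t c =>
    rw [decAt_cons_zero (hpos t mem_cons_self)] at h
    split_ifs at h with ht
    · exact Or.inr (by rw [ht, h])
    · obtain ⟨h, rfl⟩ := cons_eq_cons.1 h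
      exact Or.inl (by rw [show t = 3 by omega])

theorem exists_mismatch_deleteLetter_exceptional {c : List ℕ} {P : List Bool}
    (hc : HasComposition c P) (hsum : c.sum = 3) :
    ∃ j, 1 ≤ j ∧ j ≤ 3 ∧ Mismatch 2 (deleteLetter j P)
      (deleteLetter j [false, false, true, false, true, true]) := by
  have mismatch_at : ∀ k < 3, ∀ d, HasComposition d
      (deleteLetter (k + 1) [false, false, true, false, true, true]) → d.sum = 2 →
      decAt c k ≠ d →
      ∃ j, 1 ≤ j ∧ j ≤ 3 ∧ Mismatch 2 (deleteLetter j P)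
        (deleteLetter j [false, false, true, false, true, true]) :=
    fun k hk d hd hds hne => ⟨k + 1, by omega, by omega, mismatch_of_hasComposition_ne
      (hc.deleteLetter (hsum ▸ hk)) hd hne (hc.sum_decAt hsum hk) hds⟩
  have h₀ : HasComposition [2] (deleteLetter 1 [false, false, true, false, true, true]) :=
    ⟨[(2, false)], by simp, by decide, rfl⟩
  have h₁ : HasComposition [1, 1] (deleteLetter 2 [false, false, true, false, true, true]) :=
    ⟨[(1, false), (1, false)], by simp, by decide, rfl⟩
  have h₂ : HasComposition [2] (deleteLetter 3 [false, false, true, false, true, true]) :=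
    ⟨[(2, false)], by simp, by decide, rfl⟩
  by_cases hc₀ : decAt c 0 = [2]
  · rcases eq_of_decAt_zero_eq_two hc.pos hc₀ with rfl | rfl
    · exact mismatch_at 1 (by omega) _ h₁ rfl (by decide)
    · exact mismatch_at 2 (by omega) _ h₂ rfl (by decide)
  · exact mismatch_at 0 (by omega) _ h₀ rfl hc₀

theorem exists_mismatch_deleteLetter_of_not_hasBlockSplitting {r : ℕ} {P Q : List Bool}
    (hr : 3 ≤ r) (hQ : IsPattern r Q) (hP : HasBlockSplitting r P)
    (hQ' : ¬ HasBlockSplitting r Q) :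
    ∃ j, 1 ≤ j ∧ j ≤ r ∧ Mismatch (r - 1) (deleteLetter j P) (deleteLetter j Q) := by
  obtain ⟨c, hc, hsum⟩ := hasBlockSplitting_iff.1 hP
  have hQc : ∀ c, ¬ HasComposition c Q := fun c hc => hQ' <|
    hasBlockSplitting_iff.2 ⟨c, hc, by rw [hc.sum_eq_count true, hQ.2.1]⟩
  have hv := hasValley_of_forall_not_hasComposition (by rw [hQ.2.1, hQ.count_false]) hQc
  rcases hQ.exists_hasValley_removePair hr hv with ⟨k, hk, hvk⟩ | ⟨rfl, rfl⟩
  · exact ⟨k + 1, by omega, hk, mismatch_of_not_hasComposition (hc.deleteLetter (hsum ▸ hk))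
      (hc.sum_decAt hsum hk) hvk.not_hasComposition_deleteLetter⟩
  · exact exists_mismatch_deleteLetter_exceptional hc hsum

end Inheritance

/-- For `r ≥ 3`, every mismatched pair `{P, Q}` of `r`-patterns admits an index
`1 ≤ j ≤ r` such that `{P^{−j}, Q^{−j}}` is a mismatched pair of `(r−1)`-patterns. -/
theorem mismatch_inheritance (r : ℕ) (hr : 3 ≤ r) (P Q : List Bool)
    (hP : IsPattern r P) (hQ : IsPattern r Q) (h : Mismatch r P Q) :
    ∃ j : ℕ, 1 ≤ j ∧ j ≤ r ∧ Mismatch (r - 1) (deleteLetter j P) (deleteLetter j Q) := by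
  obtain ⟨-, ⟨hP', hQ'⟩ | ⟨hP', hQ'⟩ | ⟨hP', hQ', hPQ⟩⟩ := h
  · exact exists_mismatch_deleteLetter_of_not_hasBlockSplitting hr hQ hP' hQ'
  · obtain ⟨j, hj, hjr, h⟩ :=
      exists_mismatch_deleteLetter_of_not_hasBlockSplitting hr hP hQ' hP'
    exact ⟨j, hj, hjr, mismatch_comm.1 h⟩
  obtain ⟨c₁, hc₁, hs₁⟩ := hasBlockSplitting_iff.1 hP'
  obtain ⟨c₂, hc₂, hs₂⟩ := hasBlockSplitting_iff.1 hQ'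
  have hne : c₁ ≠ c₂ := by
    rintro rfl
    exact hPQ (sameComposition_iff.2 ⟨c₁, hc₁, hc₂⟩)
  obtain ⟨k, hk, hdec⟩ := exists_decAt_ne hr hc₁.pos hc₂.pos hs₁ hs₂ hne
  exact ⟨k + 1, by omega, hk, mismatch_of_hasComposition_ne (hc₁.deleteLetter (hs₁ ▸ hk))
    (hc₂.deleteLetter (hs₂ ▸ hk)) hdec (hc₁.sum_decAt hs₁ hk) (hc₂.sum_decAt hs₂ hk)⟩
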